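/- A De Morgan clone C with DMA ⊆ C contains a non-harmonious function if and only if C contains the binary function mnh²₁ or the binary function mnh²₂. -/
import Mathlib


set_option autoImplicit false

/-- The four truth values of the Belnap–Dunn logic. -/
inductive DM4 : Type
  | t
  | f
  | n
  | b
deriving DecidableEq

namespace DM4

/-- De Morgan negation. -/
def neg : DM4 → DM4
  | t => f
  | f => t
  | n => n
  | b => b

/-- Conflation. -/
def conf : DM4 → DM4
  | t => t
  | f => f
  | n => b
  | b => n

/-- Meet in the truth order. -/
def meet : DM4 → DM4 → DM4
  | f, _ => f
  | _, f => f
  | t, y => y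
  | x, t => x
  | n, n => n
  | b, b => b
  | n, b => f
  | b, n => f

/-- Join in the truth order. -/
def join : DM4 → DM4 → DM4
  | t, _ => t
  | _, t => t
  | f, y => y
  | x, f => x
  | n, n => n
  | b, b => b
  | n, b => t
  | b, n => t

/-- Meet in the information order (⊗). -/
def imeet : DM4 → DM4 → DM4
  | n, _ => n
  | _, n => n
  | b, y => y
  | x, b => x
  | t, t => t
  | f, f => f
  | t, f => n
  | f, t => n

/-- Join in the information order (⊕). -/
def ijoin : DM4 → DM4 → DM4
  | b, _ => b
  | _, b => b
  | n, y => y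
  | x, n => x
  | t, t => t
  | f, f => f
  | t, f => b
  | f, t => b

/-- The truth order: least element `f`, greatest element `t`, with `n`, `b` incomparable. -/
def tle (x y : DM4) : Prop := x = y ∨ x = f ∨ y = t

/-- The information order: least element `n`, greatest element `b`, with `t`, `f` incomparable. -/
def ile (x y : DM4) : Prop := x = y ∨ x = n ∨ y = b

/-- □: maps t to t and everything else to f. -/
def box : DM4 → DM4
  | t => t
  | _ => f

/-- ◇: maps f to f and everything else to t. -/
def diamond : DM4 → DM4
  | f => f
  | _ => t

/-- Δ: maps t, b to t and n, f to f. -/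
def delta : DM4 → DM4
  | t => t
  | b => t
  | _ => f

/-- ∇: maps t, n to t and b, f to f. -/
def nabla : DM4 → DM4
  | t => t
  | n => t
  | _ => f

/-- id_{b↦n}: maps b to n and fixes t, f, n. -/
def idbn : DM4 → DM4
  | b => n
  | x => x

/-- id_{n↦b}: maps n to b and fixes t, f, b. -/
def idnb : DM4 → DM4
  | n => b
  | x => x

/-- id_{n↦t}: maps n to t and fixes t, f, b. -/
def idnt : DM4 → DM4
  | n => t
  | x => x

/-- id_{b↦t}: maps b to t and fixes t, f, n. -/
def idbt : DM4 → DM4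
  | b => t
  | x => x

/-- t_{n↦n}: maps n to n and everything else to t. -/
def tnn : DM4 → DM4
  | n => n
  | _ => t

/-- t_{b↦b}: maps b to b and everything else to t. -/
def tbb : DM4 → DM4
  | b => b
  | _ => t

/-- The binary function pbp²₁. -/
def pbp1 : DM4 → DM4 → DM4
  | t, t => t | t, f => f | t, n => f | t, b => b
  | f, t => t | f, f => f | f, n => f | f, b => b
  | n, t => t | n, f => f | n, n => n | n, b => b
  | b, t => b | b, f => f | b, n => f | b, b => b

/-- The binary function pbp²₂. -/
def pbp2 : DM4 → DM4 → DM4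
  | t, t => t | t, f => f | t, n => n | t, b => f
  | f, t => t | f, f => f | f, n => n | f, b => f
  | n, t => n | n, f => f | n, n => n | n, b => f
  | b, t => t | b, f => f | b, n => n | b, b => b

/-- The binary function mnh²₁. -/
def mnh1 : DM4 → DM4 → DM4
  | t, t => f | t, f => f | t, n => n | t, b => b
  | f, t => f | f, f => f | f, n => n | f, b => b
  | n, t => f | n, f => f | n, n => n | n, b => f
  | b, t => f | b, f => f | b, n => n | b, b => b

/-- The binary function mnh²₂. -/
def mnh2 : DM4 → DM4 → DM4
  | t, t => f | t, f => f | t, n => n | t, b => b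
  | f, t => f | f, f => f | f, n => n | f, b => b
  | n, t => f | n, f => f | n, n => n | n, b => b
  | b, t => f | b, f => f | b, n => f | b, b => b

/-- The binary function mhnp². -/
def mhnp2 : DM4 → DM4 → DM4
  | t, _ => t
  | f, _ => t
  | n, b => f
  | n, _ => n
  | b, n => f
  | b, _ => b

/-- The binary function mnp²₁. -/
def mnp1 : DM4 → DM4 → DM4
  | t, b => b
  | t, _ => t
  | f, b => b
  | f, _ => t
  | n, b => f
  | n, _ => n
  | b, n => f
  | b, _ => b

/-- The binary function mnp²₂. -/
def mnp2 : DM4 → DM4 → DM4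
  | t, _ => t
  | f, _ => t
  | n, _ => n
  | b, n => f
  | b, _ => b

/-- The binary function mnp²₃. -/
def mnp3 : DM4 → DM4 → DM4
  | t, n => n
  | t, _ => t
  | f, n => n
  | f, _ => t
  | n, b => f
  | n, _ => n
  | b, n => f
  | b, _ => b

/-- The binary function mnp²₄. -/
def mnp4 : DM4 → DM4 → DM4
  | t, _ => t
  | f, _ => t
  | n, b => f
  | n, _ => n
  | b, _ => b

/-- The ternary function mhnp³. -/
def mhnp3 : DM4 → DM4 → DM4 → DM4
  | _, t, _ => f
  | _, f, _ => f
  | t, n, _ => n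
  | f, n, _ => f
  | b, n, _ => f
  | n, n, b => f
  | n, n, _ => n
  | t, b, _ => b
  | f, b, _ => f
  | n, b, _ => f
  | b, b, n => f
  | b, b, _ => b

/-- The set of designated values. -/
def Des : Set DM4 := {t, b}

/-- Designatedness as a Boolean predicate. -/
def des : DM4 → Bool
  | t => true
  | b => true
  | _ => false

/-- The protoimplication →_{t-max}. -/
def tmax (x y : DM4) : DM4 :=
  match des x, des y with
  | true, false => n
  | _, _ => t

/-- The protoimplication →_{i-max}. -/
def imax (x y : DM4) : DM4 :=
  match des x, des y with
  | true, false => f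
  | _, _ => b

/-- The protoimplication ↔_{t-min}. -/
def tmin (x y : DM4) : DM4 := if x = y then b else f

/-- The protoimplication ↔_{i-min}. -/
def imin (x y : DM4) : DM4 := if x = y then t else n

/-- A binary operation is a protoimplication if it satisfies Reflexivity and Modus Ponens
with respect to the designated set {t, b}. -/
def IsProtoimplication (r : DM4 → DM4 → DM4) : Prop :=
  (∀ a : DM4, r a a ∈ Des) ∧ ∀ a c : DM4, a ∈ Des → r a c ∈ Des → c ∈ Des

/-- `DMFun k` is the type of De Morgan functions of arity `k + 1` (arities are positive). -/
abbrev DMFun (k : ℕ) : Type := (Fin (k + 1) → DM4) → DM4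

/-- Membership in the clone generated by the family of operations `S`
(`S k` is the set of generators of arity `k + 1`). -/
inductive InClone (S : ∀ k : ℕ, Set (DMFun k)) : ∀ k : ℕ, DMFun k → Prop
  | base {k : ℕ} {g : DMFun k} : g ∈ S k → InClone S k g
  | proj {k : ℕ} (i : Fin (k + 1)) : InClone S k (fun x => x i)
  | comp {k m : ℕ} {g : DMFun m} {h : Fin (m + 1) → DMFun k} :
      InClone S m g → (∀ i, InClone S k (h i)) →
      InClone S k (fun x => g (fun i => h i x))

/-- A family of sets of De Morgan functions is a clone if it contains all projections
and is closed under composition. -/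
structure IsClone (C : ∀ k : ℕ, Set (DMFun k)) : Prop where
  proj : ∀ (k : ℕ) (i : Fin (k + 1)), (fun x => x i) ∈ C k
  comp : ∀ (k m : ℕ) (g : DMFun m) (h : Fin (m + 1) → DMFun k),
      g ∈ C m → (∀ i, h i ∈ C k) → (fun x => g (fun i => h i x)) ∈ C k

/-- The generating family consisting of a single unary operation. -/
def op1 (g : DM4 → DM4) : ∀ k : ℕ, Set (DMFun k)
  | 0 => {fun x => g (x 0)}
  | _ + 1 => ∅

/-- The generating family consisting of a single binary operation. -/
def op2 (g : DM4 → DM4 → DM4) : ∀ k : ℕ, Set (DMFun k)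
  | 1 => {fun x => g (x 0) (x 1)}
  | _ => ∅

/-- The generating family consisting of a single ternary operation. -/
def op3 (g : DM4 → DM4 → DM4 → DM4) : ∀ k : ℕ, Set (DMFun k)
  | 2 => {fun x => g (x 0) (x 1) (x 2)}
  | _ => ∅

/-- Union of two families of operations. -/
def funion (S T : ∀ k : ℕ, Set (DMFun k)) : ∀ k : ℕ, Set (DMFun k) := fun k => S k ∪ T k

infixr:65 " ⊹ " => funion

/-- The generators of DLat: ∧, ∨, t, f (constants as unary constant functions). -/
def DLatGen : ∀ k : ℕ, Set (DMFun k) :=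
  op2 meet ⊹ op2 join ⊹ op1 (fun _ => t) ⊹ op1 (fun _ => f)

/-- The generators of DMA: ∧, ∨, t, f, −. -/
def DMAGen : ∀ k : ℕ, Set (DMFun k) := DLatGen ⊹ op1 neg

/-- The generators of BiLat: ∧, ∨, t, f, ⊗, ⊕, n, b. -/
def BiLatGen : ∀ k : ℕ, Set (DMFun k) :=
  DLatGen ⊹ op2 imeet ⊹ op2 ijoin ⊹ op1 (fun _ => n) ⊹ op1 (fun _ => b)

/-- A De Morgan function is harmonious if it commutes with conflation. -/
def Harmonious {k : ℕ} (g : DMFun k) : Prop :=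
  ∀ x : Fin (k + 1) → DM4, g (fun i => conf (x i)) = conf (g x)

/-- A De Morgan function is positive if it is monotone in the componentwise truth order. -/
def Positive {k : ℕ} (g : DMFun k) : Prop :=
  ∀ x y : Fin (k + 1) → DM4, (∀ i, tle (x i) (y i)) → tle (g x) (g y)

/-- A De Morgan function is persistent if it is monotone in the componentwise
information order. -/
def Persistent {k : ℕ} (g : DMFun k) : Prop :=
  ∀ x y : Fin (k + 1) → DM4, (∀ i, ile (x i) (y i)) → ile (g x) (g y)

/-- A De Morgan function preserves a subset X of DM4 if it maps tuples from X into X. -/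
def Preserves {k : ℕ} (g : DMFun k) (X : Set DM4) : Prop :=
  ∀ x : Fin (k + 1) → DM4, (∀ i, x i ∈ X) → g x ∈ X

def B2 : Set DM4 := {t, f}
def K3 : Set DM4 := {t, n, f}
def P3 : Set DM4 := {t, b, f}

/-- A unary operation as a De Morgan function. -/
def toF1 (g : DM4 → DM4) : DMFun 0 := fun x => g (x 0)

/-- A binary operation as a De Morgan function. -/
def toF2 (g : DM4 → DM4 → DM4) : DMFun 1 := fun x => g (x 0) (x 1)

/-- A ternary operation as a De Morgan function. -/
def toF3 (g : DM4 → DM4 → DM4 → DM4) : DMFun 2 := fun x => g (x 0) (x 1) (x 2)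

/-- The clone generated by a family of operations, as a family of sets. -/
def CloneOf (S : ∀ k : ℕ, Set (DMFun k)) : ∀ k : ℕ, Set (DMFun k) :=
  fun k => {g | InClone S k g}

/-- Inclusion of families of operations. -/
def CloneLE (C D : ∀ k : ℕ, Set (DMFun k)) : Prop := ∀ k : ℕ, C k ⊆ D k


instance : Fintype DM4 := ⟨{t, f, n, b}, fun x => by cases x <;> decide⟩

/-- Auxiliary formula: `mnh0(x,y) ∨ (p(w) ∧ p(y))` where `p(v) = v ∧ −v`. -/
def Fformula (x y w : DM4) : DM4 :=
  join (meet (meet (meet y (neg y)) (join x (neg x))) (join y (neg y)))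
       (meet (meet w (neg w)) (meet y (neg y)))

lemma key1 : ∀ x y w : DM4, (x = b → y = n → w = n) → (x = n → y = b → w ≠ b) →
    Fformula x y w = mnh1 x y := by decide

lemma key2 : ∀ x y w : DM4, (x = n → y = b → w = b) → (x = b → y = n → w ≠ n) →
    Fformula x y w = mnh2 x y := by decide

/-- Substitution gadget. -/
def pick (v : DM4) : DMFun 1 :=
  match v with
  | t => fun _ => t
  | f => fun _ => f
  | n => fun z => z 0
  | b => fun z => z 1

section Helpers

variable {C : ∀ k : ℕ, Set (DMFun k)} (hC : IsClone C)
  (hDMA : ∀ k g, InClone DMAGen k g → g ∈ C k)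

include hC hDMA

lemma mem_constT1 : (fun _ : Fin 2 → DM4 => t) ∈ C 1 := by
  have h0 : toF1 (fun _ => t) ∈ C 0 :=
    hDMA 0 _ (InClone.base (Or.inl (Or.inr (Or.inr (Or.inl rfl)))))
  exact hC.comp 1 0 (toF1 (fun _ => t)) (fun _ z => z 0) h0 (fun _ => hC.proj 1 0)

lemma mem_constF1 : (fun _ : Fin 2 → DM4 => f) ∈ C 1 := by
  have h0 : toF1 (fun _ => f) ∈ C 0 :=
    hDMA 0 _ (InClone.base (Or.inl (Or.inr (Or.inr (Or.inr rfl)))))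
  exact hC.comp 1 0 (toF1 (fun _ => f)) (fun _ z => z 0) h0 (fun _ => hC.proj 1 0)

lemma mem_neg1 {f1 : DMFun 1} (h1 : f1 ∈ C 1) : (fun z => neg (f1 z)) ∈ C 1 := by
  have h0 : toF1 neg ∈ C 0 := hDMA 0 _ (InClone.base (Or.inr rfl))
  exact hC.comp 1 0 (toF1 neg) (fun _ => f1) h0 (fun _ => h1)

lemma mem_meet1 {f1 f2 : DMFun 1} (h1 : f1 ∈ C 1) (h2 : f2 ∈ C 1) :
    (fun z => meet (f1 z) (f2 z)) ∈ C 1 := by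
  have hm : toF2 meet ∈ C 1 := hDMA 1 _ (InClone.base (Or.inl (Or.inl rfl)))
  exact hC.comp 1 1 (toF2 meet) ![f1, f2] hm
    (fun i => by fin_cases i <;> [exact h1; exact h2])

lemma mem_join1 {f1 f2 : DMFun 1} (h1 : f1 ∈ C 1) (h2 : f2 ∈ C 1) :
    (fun z => join (f1 z) (f2 z)) ∈ C 1 := by
  have hm : toF2 join ∈ C 1 := hDMA 1 _ (InClone.base (Or.inl (Or.inr (Or.inl rfl))))
  exact hC.comp 1 1 (toF2 join) ![f1, f2] hm
    (fun i => by fin_cases i <;> [exact h1; exact h2])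

lemma mem_pick (v : DM4) : pick v ∈ C 1 := by
  cases v
  · exact mem_constT1 hC hDMA
  · exact mem_constF1 hC hDMA
  · exact hC.proj 1 0
  · exact hC.proj 1 1

lemma build_mem {u' : DMFun 1} (hu' : u' ∈ C 1) :
    (fun z => Fformula (z 0) (z 1) (u' z)) ∈ C 1 := by
  have p0 : (fun z : Fin 2 → DM4 => z 0) ∈ C 1 := hC.proj 1 0
  have p1 : (fun z : Fin 2 → DM4 => z 1) ∈ C 1 := hC.proj 1 1
  exact mem_join1 hC hDMA
    (mem_meet1 hC hDMA
      (mem_meet1 hC hDMA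
        (mem_meet1 hC hDMA p1 (mem_neg1 hC hDMA p1))
        (mem_join1 hC hDMA p0 (mem_neg1 hC hDMA p0)))
      (mem_join1 hC hDMA p1 (mem_neg1 hC hDMA p1)))
    (mem_meet1 hC hDMA
      (mem_meet1 hC hDMA hu' (mem_neg1 hC hDMA hu'))
      (mem_meet1 hC hDMA p1 (mem_neg1 hC hDMA p1)))

lemma get1 {u' : DMFun 1} (hu' : u' ∈ C 1) (hbn : u' ![b, n] = n) (hnb : u' ![n, b] ≠ b) :
    toF2 mnh1 ∈ C 1 := by
  have hT := build_mem hC hDMA hu'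
  have heq : (fun z : Fin 2 → DM4 => Fformula (z 0) (z 1) (u' z)) = toF2 mnh1 := by
    funext z
    have hz : z = ![z 0, z 1] := by funext i; fin_cases i <;> rfl
    refine key1 (z 0) (z 1) (u' z) ?_ ?_
    · intro e0 e1
      have hz' : z = ![b, n] := by rw [hz, e0, e1]
      rw [hz', hbn]
    · intro e0 e1
      have hz' : z = ![n, b] := by rw [hz, e0, e1]
      rw [hz']; exact hnb
  rwa [heq] at hT

lemma get2 {u' : DMFun 1} (hu' : u' ∈ C 1) (hnb : u' ![n, b] = b) (hbn : u' ![b, n] ≠ n) :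
    toF2 mnh2 ∈ C 1 := by
  have hT := build_mem hC hDMA hu'
  have heq : (fun z : Fin 2 → DM4 => Fformula (z 0) (z 1) (u' z)) = toF2 mnh2 := by
    funext z
    have hz : z = ![z 0, z 1] := by funext i; fin_cases i <;> rfl
    refine key2 (z 0) (z 1) (u' z) ?_ ?_
    · intro e0 e1
      have hz' : z = ![n, b] := by rw [hz, e0, e1]
      rw [hz', hnb]
    · intro e0 e1
      have hz' : z = ![b, n] := by rw [hz, e0, e1]
      rw [hz']; exact hbn
  rwa [heq] at hT

end Helpers

/-- A clone above DMA contains a non-harmonious function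
iff it contains mnh²₁ or mnh²₂. -/
theorem non_harmonious_clones (C : ∀ k : ℕ, Set (DMFun k))
    (hC : IsClone C) (hDMA : ∀ k g, InClone DMAGen k g → g ∈ C k) :
    (∃ k : ℕ, ∃ g ∈ C k, ¬ Harmonious g) ↔ (toF2 mnh1 ∈ C 1 ∨ toF2 mnh2 ∈ C 1) := by
  constructor
  · rintro ⟨k, g, hg, hnh⟩
    simp only [Harmonious, not_forall] at hnh
    obtain ⟨x, hx⟩ := hnh
    set u : DMFun 1 := fun z => g (fun i => pick (x i) z) with hu_def
    have hu : u ∈ C 1 :=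
      hC.comp 1 k g (fun i => pick (x i)) hg (fun i => mem_pick hC hDMA (x i))
    have hunb : u ![n, b] = g x := by
      show g _ = g x
      congr 1
      funext i
      cases x i <;> rfl
    have hubn : u ![b, n] = g (fun i => conf (x i)) := by
      show g _ = g _
      congr 1
      funext i
      cases x i <;> rfl
    have hne : u ![b, n] ≠ conf (u ![n, b]) := by rw [hunb, hubn]; exact hx
    -- the two modified versions of u
    have p1 : (fun z : Fin 2 → DM4 => z 1) ∈ C 1 := hC.proj 1 1
    have hpy : (fun z : Fin 2 → DM4 => meet (z 1) (neg (z 1))) ∈ C 1 :=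
      mem_meet1 hC hDMA p1 (mem_neg1 hC hDMA p1)
    have huand : (fun z => meet (u z) (meet (z 1) (neg (z 1)))) ∈ C 1 :=
      mem_meet1 hC hDMA hu hpy
    have huor : (fun z => join (u z) (meet (z 1) (neg (z 1)))) ∈ C 1 :=
      mem_join1 hC hDMA hu hpy
    cases h1 : u ![n, b] <;> cases h2 : u ![b, n]
    -- a = t
    · rw [h1, h2] at hne; exact absurd rfl hne
    · right
      exact get2 hC hDMA huand (by rw [h1]; decide) (by rw [h2]; decide)
    · left
      exact get1 hC hDMA hu h2 (by rw [h1]; decide)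
    · right
      exact get2 hC hDMA huand (by rw [h1]; decide) (by rw [h2]; decide)
    -- a = f
    · right
      exact get2 hC hDMA huor (by rw [h1]; decide) (by rw [h2]; decide)
    · rw [h1, h2] at hne; exact absurd rfl hne
    · left
      exact get1 hC hDMA hu h2 (by rw [h1]; decide)
    · right
      exact get2 hC hDMA huor (by rw [h1]; decide) (by rw [h2]; decide)
    -- a = n
    · left
      exact get1 hC hDMA huand (by rw [h2]; decide) (by rw [h1]; decide)
    · left
      exact get1 hC hDMA huor (by rw [h2]; decide) (by rw [h1]; decide)
    · left
      exact get1 hC hDMA hu h2 (by rw [h1]; decide)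
    · rw [h1, h2] at hne; exact absurd rfl hne
    -- a = b
    · right
      exact get2 hC hDMA hu h1 (by rw [h2]; decide)
    · right
      exact get2 hC hDMA hu h1 (by rw [h2]; decide)
    · rw [h1, h2] at hne; exact absurd rfl hne
    · right
      exact get2 hC hDMA hu h1 (by rw [h2]; decide)
  · rintro (h | h)
    · refine ⟨1, toF2 mnh1, h, fun H => ?_⟩
      have := H ![n, b]
      simp [toF2, conf, mnh1] at this
    · refine ⟨1, toF2 mnh2, h, fun H => ?_⟩
      have := H ![n, b]
      simp [toF2, conf, mnh2] at this

end DM4
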